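/- arXiv:1910.08129 — 3 statements merged into one kernel-verified Lean document; each statement's English description precedes it below -/
import Mathlib

section
/- In a rightmost derivation of a grammar with c symbols, if the derivation has more than c steps then some step uses a right-recursive rule. Equivalently: every rightmost derivation sequence in which no step uses a right-recursive rule has length at most c. -/
structure CFG (α : Type) where
  rules : Set (α × List α)

def CFG.Step {α : Type} (g : CFG α) (u v : List α) : Prop :=
  ∃ (A : α) (rhs pre post : List α),
    (A, rhs) ∈ g.rules ∧ u = pre ++ [A] ++ post ∧ v = pre ++ rhs ++ post

def CFG.Derives {α : Type} (g : CFG α) : List α → List α → Prop :=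
  Relation.ReflTransGen g.Step

/-- A rule `B → γ ++ [r]` is right-recursive if its rightmost symbol `r`
derives, in zero or more steps, a string whose rightmost symbol is `B`. -/
def RightRec {α : Type} (g : CFG α) (B : α) (rhs : List α) : Prop :=
  ∃ (γ : List α) (r : α), rhs = γ ++ [r] ∧ ∃ δ : List α, g.Derives [r] (δ ++ [B])

/-- In a grammar with `c` symbols, a chain of rightmost-expansion derivation
steps (at each step the rightmost symbol `A j` is rewritten by a rule whose
right-hand side ends in `A (j+1)`) of length more than `c` must use a
right-recursive rule at some step. -/
theorem stmt3 {α : Type} [Fintype α] (g : CFG α) (c : ℕ) (hc : Fintype.card α = c)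
    (m : ℕ) (A : ℕ → α) (rhs γ : ℕ → List α)
    (hrule : ∀ j < m, (A j, rhs j) ∈ g.rules ∧ rhs j = γ j ++ [A (j + 1)])
    (hm : m > c) :
    ∃ j < m, RightRec g (A j) (rhs j) := by
  -- key: from any i < j ≤ m with A i = A j, the rule at i is right-recursive
  have key : ∀ i j : ℕ, i < j → j ≤ m → A i = A j →
      ∃ k < m, RightRec g (A k) (rhs k) := by
    intro i j hij hjm hA
    refine ⟨i, lt_of_lt_of_le hij hjm, γ i, A (i + 1), (hrule i (lt_of_lt_of_le hij hjm)).2, ?_⟩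
    -- show [A (i+1)] derives δ ++ [A i] for some δ
    have chain : ∀ n : ℕ, i + 1 + n ≤ j →
        ∃ δ : List α, g.Derives [A (i + 1)] (δ ++ [A (i + 1 + n)]) := by
      intro n
      induction n with
      | zero => intro _; exact ⟨[], Relation.ReflTransGen.refl⟩
      | succ n ih =>
        intro hn
        obtain ⟨δ, hδ⟩ := ih (by omega)
        set k := i + 1 + n with hk
        have hkm : k < m := by omega
        obtain ⟨hr, hrhs⟩ := hrule k hkm
        refine ⟨δ ++ γ k, Relation.ReflTransGen.tail hδ ?_⟩
        refine ⟨A k, rhs k, δ, [], hr, by simp, ?_⟩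
        have : i + 1 + (n + 1) = k + 1 := by omega
        rw [this, hrhs]
        simp
    obtain ⟨δ, hδ⟩ := chain (j - (i + 1)) (by omega)
    have : i + 1 + (j - (i + 1)) = j := by omega
    rw [this] at hδ
    exact ⟨δ, hA ▸ hδ⟩
  -- pigeonhole
  have hninj : ¬ Function.Injective (fun k : Fin (c + 1) => A k.val) := by
    intro hinj
    have := Fintype.card_le_of_injective _ hinj
    simp [hc] at this
  rw [Function.not_injective_iff] at hninj
  obtain ⟨i, j, hAij, hij⟩ := hninj
  rcases lt_or_gt_of_ne hij with hlt | hlt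
  · exact key i j (by exact_mod_cast hlt) (by omega) hAij
  · exact key j i (by exact_mod_cast hlt) (by omega) hAij.symm
end

section
/- If a symbol A appears as the rightmost symbol of a sentential form, and after one or more rightmost-expansion steps A appears again as the rightmost symbol, then the first rule applied in that sequence is right-recursive. -/
/-- A rightmost-expansion step: the rightmost symbol of the sentential form is
rewritten by a rule of the grammar. -/
def RStep {α : Type} (g : CFG α) (u v : List α) : Prop :=
  ∃ (A : α) (rhs pre : List α),
    u = pre ++ [A] ∧ (A, rhs) ∈ g.rules ∧ v = pre ++ rhs

lemma rchain_suffix {α : Type} (g : CFG α)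
    (hrhs : ∀ p ∈ g.rules, p.2 ≠ ([] : List α))
    {p : List α} {x : α} {w : List α}
    (h : Relation.ReflTransGen (RStep g) (p ++ [x]) w) :
    ∃ s, s ≠ [] ∧ w = p ++ s ∧ g.Derives [x] s := by
  induction h with
  | refl => exact ⟨[x], by simp, rfl, Relation.ReflTransGen.refl⟩
  | tail hwv hstep ih =>
    obtain ⟨s, hs, rfl, hd⟩ := ih
    obtain ⟨B, rhs, pre, heq, hrule, rfl⟩ := hstep
    rcases List.eq_nil_or_concat s with rfl | ⟨s₀, c, rfl⟩
    · exact absurd rfl hs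
    have heq' : (p ++ s₀) ++ [c] = pre ++ [B] := by
      simpa [List.append_assoc] using heq
    obtain ⟨h1, h2⟩ := List.append_inj' heq' rfl
    have hcB : c = B := by simpa using h2
    subst hcB
    subst h1
    refine ⟨s₀ ++ rhs, ?_, by simp, ?_⟩
    · have : rhs ≠ [] := hrhs (c, rhs) hrule
      simp [this]
    · have hd' : g.Derives [x] (s₀ ++ [c]) := by simpa using hd
      exact hd'.tail ⟨c, rhs, s₀, [], hrule, by simp, by simp⟩

/-- In a grammar with no nullable symbols (hence no empty right-hand sides),
if the rightmost symbol `A` is expanded by the rule `A → γ ++ [r]` and after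
zero or more further rightmost-expansion steps `A` again appears as the
rightmost symbol, then the rule `A → γ ++ [r]` is right-recursive. -/
theorem stmt5 {α : Type} (g : CFG α)
    (hnn : ∀ a : α, ¬ g.Derives [a] [])
    (hrhs : ∀ p ∈ g.rules, p.2 ≠ ([] : List α))
    (pre1 pre2 γ : List α) (A r : α)
    (hrule : (A, γ ++ [r]) ∈ g.rules)
    (hchain : Relation.ReflTransGen (RStep g) (pre1 ++ γ ++ [r]) (pre2 ++ [A])) :
    RightRec g A (γ ++ [r]) := by
  have hchain' : Relation.ReflTransGen (RStep g) ((pre1 ++ γ) ++ [r]) (pre2 ++ [A]) := by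
    simpa [List.append_assoc] using hchain
  obtain ⟨s, hs, heq, hd⟩ := rchain_suffix g hrhs hchain'
  rcases List.eq_nil_or_concat s with rfl | ⟨t, c, rfl⟩
  · exact absurd rfl hs
  have heq' : pre2 ++ [A] = ((pre1 ++ γ) ++ t) ++ [c] := by
    simpa [List.append_assoc] using heq
  obtain ⟨-, h2⟩ := List.append_inj' heq' rfl
  have hcA : A = c := by simpa using h2
  subst hcA
  exact ⟨γ, r, rfl, t, by simpa using hd⟩
end

section
/- A derivation chain bound: in a grammar with no nullable symbols, if A ⇒⁺ β·A (A derives in one or more steps a string with rightmost symbol A), then the grammar contains at least one right-recursive rule. -/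
lemma step_split {α : Type} {g : CFG α} {u1 u2 v : List α}
    (h : g.Step (u1 ++ u2) v) :
    ∃ v1 v2, v = v1 ++ v2 ∧ ((g.Step u1 v1 ∧ v2 = u2) ∨ (v1 = u1 ∧ g.Step u2 v2)) := by
  obtain ⟨B, rhs, pre, post, hr, heq, hv⟩ := h
  rw [List.append_assoc] at heq
  rcases List.append_eq_append_iff.mp heq with ⟨k, hk1, hk2⟩ | ⟨k, hk1, hk2⟩
  · refine ⟨u1, k ++ rhs ++ post, ?_, Or.inr ⟨rfl, B, rhs, k, post, hr, by simp [hk2], by simp⟩⟩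
    simp [hv, hk1]
  · cases k with
    | nil =>
      simp only [List.nil_append, List.append_nil] at hk1 hk2
      refine ⟨u1, rhs ++ post, ?_, Or.inr ⟨rfl, B, rhs, [], post, hr, by simp [← hk2], by simp⟩⟩
      simp [hv, hk1]
    | cons x t =>
      simp only [List.cons_append, List.cons.injEq] at hk2
      obtain ⟨hx, hpost⟩ := hk2
      refine ⟨pre ++ rhs ++ t, u2, ?_, Or.inl ⟨⟨B, rhs, pre, t, hr, by simp [hk1, hx], rfl⟩, rfl⟩⟩
      simp at hpost
      simp [hv, hpost]

lemma derives_split {α : Type} {g : CFG α} {u w : List α}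
    (h : g.Derives u w) :
    ∀ u1 u2, u = u1 ++ u2 → ∃ w1 w2, w = w1 ++ w2 ∧ g.Derives u1 w1 ∧ g.Derives u2 w2 := by
  induction h using Relation.ReflTransGen.head_induction_on with
  | refl => exact fun u1 u2 hu => ⟨u1, u2, hu, .refl, .refl⟩
  | head hst _ ih =>
    rintro u1 u2 rfl
    obtain ⟨v1, v2, rfl, hc⟩ := step_split hst
    obtain ⟨w1, w2, rfl, hd1, hd2⟩ := ih v1 v2 rfl
    rcases hc with ⟨hs, rfl⟩ | ⟨rfl, hs⟩
    · exact ⟨w1, w2, rfl, hd1.head hs, hd2⟩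
    · exact ⟨w1, w2, rfl, hd1, hd2.head hs⟩

/-- In a grammar with no nullable symbols, if `A` derives in one or more
steps a string whose rightmost symbol is again `A`, then the grammar contains
a right-recursive rule. -/
theorem stmt16 {α : Type} (g : CFG α)
    (hnn : ∀ a : α, ¬ g.Derives [a] [])
    (A : α) (β : List α)
    (h : Relation.TransGen g.Step [A] (β ++ [A])) :
    ∃ B rhs, (B, rhs) ∈ g.rules ∧ RightRec g B rhs := by
  obtain ⟨v, hst, hd⟩ := Relation.TransGen.head'_iff.mp h
  obtain ⟨B, rhs, pre, post, hr, heq, hv⟩ := hst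
  have hlen := congrArg List.length heq
  simp only [List.length_append, List.length_cons, List.length_nil] at hlen
  obtain rfl : pre = [] := List.eq_nil_of_length_eq_zero (by omega)
  obtain rfl : post = [] := List.eq_nil_of_length_eq_zero (by omega)
  simp only [List.nil_append, List.append_nil] at heq hv
  obtain rfl : B = A := by simpa using heq.symm
  subst v
  -- rhs ≠ []
  have hne : rhs ≠ [] := by
    rintro rfl
    exact hnn B (Relation.ReflTransGen.single ⟨B, [], [], [], hr, by simp, by simp⟩)
  rcases List.eq_nil_or_concat rhs with rfl | ⟨γ, r, rfl⟩
  · exact absurd rfl hne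
  simp only [List.concat_eq_append] at hd hr hne ⊢
  obtain ⟨w1, w2, hw, hd1, hd2⟩ := derives_split hd γ [r] rfl
  have hw2ne : w2 ≠ [] := by
    rintro rfl
    exact hnn r (by simpa using hd2)
  rcases List.eq_nil_or_concat w2 with rfl | ⟨δ, b, rfl⟩
  · exact absurd rfl hw2ne
  simp only [List.concat_eq_append] at hw hd2
  have hb : b = B := by
    have h' : β ++ [B] = (w1 ++ δ) ++ [b] := by rw [hw, List.append_assoc]
    have := (List.append_inj_right' h' rfl)
    simpa using this.symm
  rw [hb] at hd2
  exact ⟨B, γ ++ [r], hr, γ, r, rfl, δ, hd2⟩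
end
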